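/- Let k be a field and Λ, A two finite-dimensional k-algebras. Let F be an exact additive functor from the category of finite-dimensional Λ-modules to the category of finite-dimensional A-modules such that F(X) = 0 implies X = 0. If 𝓝 is a hyperfinite family of finite-dimensional Λ-modules, then the family {F(X) : X ∈ 𝓝} of finite-dimensional A-modules is also hyperfinite. -/

import Mathlib

/-!
Write `c = dim F(Λ)` and `d = dim Λ`. Exactness makes `dim ∘ F` additive on short exact sequences,
and every nonzero module `X` contains a nonzero cyclic submodule `Λx`, a quotient of `Λ`; since `F`
preserves epimorphisms and reflects zero objects, `1 ≤ dim Λx ≤ d` and `1 ≤ dim F(Λx) ≤ c`.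
Peeling off such submodules gives `dim F(X) ≤ c · dim X` and `dim X ≤ d · dim F(X)`.

For `M` in the family, take the witness `N = ⊕ Zⱼ ⊆ M` for `ε / (cd + 1)`. Then
`dim F(M/N) ≤ c · dim (M/N) ≤ cd · ε / (cd + 1) · dim F(M)`, so `F(N) ↪ F(M)` has large image.
The decomposition of `N` is a complete family of orthogonal idempotents of `End N`; the
additive functor `F` maps it to one of `End F(N)`, which decomposes `F(N)` into images of the
`F(Zⱼ)`, each of dimension at most `c · L`.
-/

open CategoryTheory

/-- The `k`-dimension of a module over the `k`-algebra `A`, computed after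
restricting scalars along `k → A`. -/
noncomputable def kdim (k A : Type) [Field k] [Ring A] [Algebra k A]
    (M : Type*) [AddCommGroup M] [Module A M] : ℕ :=
  Module.finrank k (RestrictScalars k A M)

/-- A set of (finite-dimensional) `A`-modules is *hyperfinite* if for every `ε > 0`
there is a bound `L` such that every member `M` contains an `A`-submodule `N` with
`dim_k N ≥ (1 - ε) * dim_k M` which decomposes as a (finite, internal) direct sum of
`A`-modules each of `k`-dimension at most `L`. -/
def IsHyperfinite (k A : Type) [Field k] [Ring A] [Algebra k A]
    (ℳ : Set (ModuleCat A)) : Prop :=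
  ∀ ε : ℝ, 0 < ε → ∃ L : ℕ, 0 < L ∧ ∀ M ∈ ℳ,
    ∃ N : Submodule A M,
      (1 - ε) * (kdim k A M : ℝ) ≤ (kdim k A N : ℝ) ∧
      ∃ (t : ℕ) (Z : Fin t → Submodule A N),
        DirectSum.IsInternal Z ∧ ∀ j, kdim k A (Z j) ≤ L

universe u v

-- The hypotheses of the main theorem state finite-dimensionality over the `AddCommGroup` structure
-- of `RestrictScalars k A M`, whereas `RestrictScalars.module` is registered over its
-- `AddCommMonoid` structure; these two instances make instance search agree with the former.
instance RestrictScalars.moduleOfAddCommGroup (k A : Type) [Field k] [Ring A] [Algebra k A]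
    (M : Type*) [AddCommGroup M] [Module A M] :
    @Module k (RestrictScalars k A M) _
      (@AddCommGroup.toAddCommMonoid _ (instAddCommGroupRestrictScalars k A M)) :=
  RestrictScalars.module k A M

instance RestrictScalars.addCommMonoidOfAddCommGroup (k A : Type) (M : Type*) [AddCommGroup M] :
    AddCommMonoid (RestrictScalars k A M) :=
  @AddCommGroup.toAddCommMonoid _ (instAddCommGroupRestrictScalars k A M)

namespace RestrictScalars

variable (k : Type) {A : Type} [Field k] [Ring A] [Algebra k A]
  {M N : Type*} [AddCommGroup M] [Module A M] [AddCommGroup N] [Module A N]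

def lmap (f : M →ₗ[A] N) : RestrictScalars k A M →ₗ[k] RestrictScalars k A N where
  toFun := f
  map_add' := f.map_add
  map_smul' c := f.map_smul (algebraMap k A c)

end RestrictScalars

section kdim

open RestrictScalars

variable (k : Type) {A : Type} [Field k] [Ring A] [Algebra k A]
  {M N P : Type*} [AddCommGroup M] [Module A M] [AddCommGroup N] [Module A N]
  [AddCommGroup P] [Module A P]

lemma kdim_congr (e : M ≃ₗ[A] N) : kdim k A M = kdim k A N :=
  (LinearEquiv.ofBijective (lmap k e.toLinearMap) e.bijective).finrank_eq

lemma finiteDimensional_of_injective [FiniteDimensional k (RestrictScalars k A N)]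
    {f : M →ₗ[A] N} (hf : Function.Injective f) :
    FiniteDimensional k (RestrictScalars k A M) :=
  .of_injective (lmap k f) hf

lemma finiteDimensional_of_surjective [FiniteDimensional k (RestrictScalars k A M)]
    {f : M →ₗ[A] N} (hf : Function.Surjective f) :
    FiniteDimensional k (RestrictScalars k A N) :=
  Module.Finite.of_surjective (lmap k f) hf

lemma kdim_le_of_injective [FiniteDimensional k (RestrictScalars k A N)]
    {f : M →ₗ[A] N} (hf : Function.Injective f) : kdim k A M ≤ kdim k A N :=
  show Module.finrank k (RestrictScalars k A M) ≤ Module.finrank k (RestrictScalars k A N) from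
    LinearMap.finrank_le_finrank_of_injective (f := lmap k f) hf

lemma kdim_le_of_surjective [FiniteDimensional k (RestrictScalars k A M)]
    {f : M →ₗ[A] N} (hf : Function.Surjective f) : kdim k A N ≤ kdim k A M :=
  show Module.finrank k (RestrictScalars k A N) ≤ Module.finrank k (RestrictScalars k A M) from
    LinearMap.finrank_le_finrank_of_surjective (f := lmap k f) hf

lemma kdim_le_of_le_range [FiniteDimensional k (RestrictScalars k A M)] {f : M →ₗ[A] N}
    {p : Submodule A N} (h : p ≤ LinearMap.range f) : kdim k A p ≤ kdim k A M :=
  have := finiteDimensional_of_surjective k (LinearMap.surjective_rangeRestrict f)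
  (kdim_le_of_injective k (Submodule.inclusion_injective h)).trans
    (kdim_le_of_surjective k (LinearMap.surjective_rangeRestrict f))

lemma kdim_eq_zero_iff [FiniteDimensional k (RestrictScalars k A M)] :
    kdim k A M = 0 ↔ Subsingleton M :=
  Module.finrank_zero_iff (R := k) (M := RestrictScalars k A M)

lemma kdim_pos [FiniteDimensional k (RestrictScalars k A M)] [Nontrivial M] : 0 < kdim k A M :=
  Nat.pos_of_ne_zero fun h ↦ not_subsingleton M ((kdim_eq_zero_iff k).1 h)

lemma kdim_eq_add_of_exact [FiniteDimensional k (RestrictScalars k A N)]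
    {f : M →ₗ[A] N} {g : N →ₗ[A] P} (hf : Function.Injective f) (hg : Function.Surjective g)
    (hfg : Function.Exact f g) : kdim k A N = kdim k A M + kdim k A P := by
  have hker : LinearMap.ker (lmap k g) = LinearMap.range (lmap k f) :=
    Function.Exact.linearMap_ker_eq (f := lmap k f) (g := lmap k g) hfg
  have hrange : LinearMap.range (lmap k g) = ⊤ := LinearMap.range_eq_top.2 hg
  have rank_nullity := LinearMap.finrank_range_add_finrank_ker (lmap k g)
  rw [hker, hrange, finrank_top, LinearMap.finrank_range_of_inj (f := lmap k f) hf] at rank_nullity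
  show Module.finrank k (RestrictScalars k A N) =
    Module.finrank k (RestrictScalars k A M) + Module.finrank k (RestrictScalars k A P)
  omega

lemma kdim_eq_add_quotient (p : Submodule A M) [FiniteDimensional k (RestrictScalars k A M)] :
    kdim k A M = kdim k A p + kdim k A (M ⧸ p) :=
  kdim_eq_add_of_exact k p.injective_subtype p.mkQ_surjective (LinearMap.exact_subtype_mkQ p)

end kdim

def RestrictScalars.linearEquivSelf (k A : Type) [Field k] [Ring A] [Algebra k A] :
    RestrictScalars k A A ≃ₗ[k] A where
  __ := RestrictScalars.addEquiv k A A
  map_smul' c x := (RestrictScalars.addEquiv_map_smul k A A c x).trans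
    (algebraMap_smul A c (RestrictScalars.addEquiv k A A x))

instance RestrictScalars.finiteDimensional_ulift (k A : Type) [Field k] [Ring A] [Algebra k A]
    [FiniteDimensional k A] :
    FiniteDimensional k (RestrictScalars k A (ULift.{v} A)) :=
  have : FiniteDimensional k (RestrictScalars k A A) :=
    Module.Finite.equiv (RestrictScalars.linearEquivSelf k A).symm
  finiteDimensional_of_injective k (ULift.moduleEquiv (R := A) (M := A)).injective

section idempotents

variable {R M ι : Type*} [Ring R] [AddCommGroup M] [Module R M] [Fintype ι] [DecidableEq ι]

theorem CompleteOrthogonalIdempotents.isInternal_range {e : ι → Module.End R M}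
    (he : CompleteOrthogonalIdempotents e) :
    DirectSum.IsInternal fun i ↦ LinearMap.range (e i) := by
  refine DirectSum.isInternal_submodule_of_iSupIndep_of_iSup_eq_top (fun i ↦ ?_) ?_
  · have hker : ⨆ (j) (_ : j ≠ i), LinearMap.range (e j) ≤ LinearMap.ker (e i) :=
      iSup₂_le fun j hji ↦ LinearMap.range_le_ker_iff.2 (he.ortho hji.symm)
    exact (LinearMap.IsIdempotentElem.isCompl (he.idem i)).disjoint.mono_right hker
  · refine eq_top_iff.2 fun x _ ↦ ?_
    have hx : ∑ i, e i x = x := by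
      rw [← LinearMap.sum_apply, he.complete, Module.End.one_apply]
    exact hx ▸ Submodule.sum_mem_iSup fun i ↦ LinearMap.mem_range_self (e i) x

end idempotents

namespace DirectSum.IsInternal

variable {R M ι : Type*} [Ring R] [AddCommGroup M] [Module R M] [Fintype ι] [DecidableEq ι]
  {Z : ι → Submodule R M}

noncomputable def proj (hZ : IsInternal Z) (i : ι) : M →ₗ[R] Z i :=
  component R ι (fun i ↦ Z i) i ∘ₗ (LinearEquiv.ofBijective (coeLinearMap Z) hZ).symm.toLinearMap

theorem completeOrthogonalIdempotents_subtype_comp_proj (hZ : IsInternal Z) :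
    CompleteOrthogonalIdempotents fun i ↦ (Z i).subtype ∘ₗ hZ.proj i := by
  refine CompleteOrthogonalIdempotents.iff_ortho_complete.2 ⟨fun i j hij ↦ ?_, ?_⟩
  · ext x
    exact congrArg Subtype.val (hZ.ofBijective_coeLinearMap_of_mem_ne hij.symm (hZ.proj j x).2)
  · ext x
    set E := LinearEquiv.ofBijective (coeLinearMap Z) hZ
    rw [LinearMap.sum_apply, Module.End.one_apply]
    conv_rhs => rw [← E.apply_symm_apply x, ← sum_univ_of (E.symm x), map_sum]
    exact Finset.sum_congr rfl fun i _ ↦ (coeLinearMap_of Z i _).symm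

end DirectSum.IsInternal

def CategoryTheory.Functor.mapEndRingHom {C D : Type*} [Category C] [Category D] [Preadditive C]
    [Preadditive D] (F : C ⥤ D) [F.Additive] (X : C) : End X →+* End (F.obj X) :=
  { F.mapEnd X, F.mapAddHom with }

theorem CategoryTheory.ShortComplex.ShortExact.kdim_eq_add (k : Type) {A : Type} [Field k] [Ring A]
    [Algebra k A] {S : ShortComplex (ModuleCat A)} (hS : S.ShortExact)
    [FiniteDimensional k (RestrictScalars k A S.X₂)] :
    kdim k A S.X₂ = kdim k A S.X₁ + kdim k A S.X₃ :=
  kdim_eq_add_of_exact k hS.moduleCat_injective_f hS.moduleCat_surjective_g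
    ((ShortExact.moduleCat_exact_iff_function_exact S).1 hS.exact)

abbrev Submodule.shortComplex {R : Type*} [Ring R] {X : Type v} [AddCommGroup X] [Module R X]
    (p : Submodule R X) : ShortComplex (ModuleCat.{v} R) :=
  ModuleCat.shortComplexOfCompEqZero p.subtype p.mkQ
    (LinearMap.exact_subtype_mkQ p).linearMap_comp_eq_zero

theorem Submodule.shortExact_shortComplex {R : Type*} [Ring R] {X : Type v} [AddCommGroup X]
    [Module R X] (p : Submodule R X) : p.shortComplex.ShortExact :=
  ModuleCat.shortComplex_shortExact _ (LinearMap.exact_subtype_mkQ p) p.injective_subtype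
    p.mkQ_surjective

theorem exists_nontrivial_cyclic_submodule {R : Type*} [Ring R] {X : Type v} [AddCommGroup X]
    [Module R X] [Nontrivial X] :
    ∃ p : Submodule R X, Nontrivial p ∧ ∃ g : ULift.{v} R →ₗ[R] p, Function.Surjective g := by
  obtain ⟨x, hx⟩ := exists_ne (0 : X)
  refine ⟨LinearMap.range (LinearMap.toSpanSingleton R X x), ⟨⟨x, 1, one_smul R x⟩, 0, ?_⟩,
    (LinearMap.toSpanSingleton R X x).rangeRestrict ∘ₗ ULift.moduleEquiv.toLinearMap,
    (LinearMap.surjective_rangeRestrict _).comp ULift.moduleEquiv.surjective⟩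
  simpa [Subtype.ext_iff] using hx

theorem le_mul_of_forall_exists_submodule {R : Type*} [Ring R] (P : ModuleCat.{v} R → Prop)
    (φ ψ : ModuleCat.{v} R → ℕ) (b : ℕ)
    (hP : ∀ (X : ModuleCat.{v} R) (p : Submodule R X), P X → P (.of R (X ⧸ p)))
    (hφ : ∀ (X : ModuleCat.{v} R) (p : Submodule R X), P X → φ X = φ (.of R p) + φ (.of R (X ⧸ p)))
    (hψ : ∀ (X : ModuleCat.{v} R) (p : Submodule R X), P X → ψ X = ψ (.of R p) + ψ (.of R (X ⧸ p)))
    (hsub : ∀ X, P X → ψ X ≠ 0 → ∃ p : Submodule R X, 0 < φ (.of R p) ∧ ψ (.of R p) ≤ b)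
    (X : ModuleCat.{v} R) (hX : P X) : ψ X ≤ b * φ X := by
  induction hn : φ X using Nat.strong_induction_on generalizing X with
  | _ n ih =>
    by_cases hψX : ψ X = 0
    · simp [hψX]
    obtain ⟨p, hφp, hψp⟩ := hsub X hX hψX
    have hφX := hφ X p hX
    have hquot := ih _ (by omega) _ (hP X p hX) rfl
    calc ψ X = ψ (.of R p) + ψ (.of R (X ⧸ p)) := hψ X p hX
      _ ≤ b * 1 + b * φ (.of R (X ⧸ p)) := by gcongr; omega
      _ ≤ b * n := by rw [← mul_add]; gcongr; omega

section ExactFunctor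

variable (k : Type) {Λ A : Type} [Field k] [Ring Λ] [Ring A] [Algebra k A]
  (F : ModuleCat.{u} Λ ⥤ ModuleCat.{v} A)

theorem kdim_obj_eq_add [F.PreservesZeroMorphisms]
    (hexact : ∀ S : ShortComplex (ModuleCat Λ), S.ShortExact → (S.map F).ShortExact)
    (X : ModuleCat Λ) (p : Submodule Λ X) [FiniteDimensional k (RestrictScalars k A (F.obj X))] :
    kdim k A (F.obj X) = kdim k A (F.obj (.of Λ p)) + kdim k A (F.obj (.of Λ (X ⧸ p))) :=
  have : FiniteDimensional k (RestrictScalars k A (p.shortComplex.map F).X₂) := ‹_›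
  (hexact _ p.shortExact_shortComplex).kdim_eq_add k

theorem injective_map_subtype [F.PreservesZeroMorphisms]
    (hexact : ∀ S : ShortComplex (ModuleCat Λ), S.ShortExact → (S.map F).ShortExact)
    {X : ModuleCat Λ} (p : Submodule Λ X) :
    Function.Injective (F.map (ModuleCat.ofHom p.subtype)).hom :=
  (hexact _ p.shortExact_shortComplex).moduleCat_injective_f

theorem surjective_map_of_surjective [F.PreservesZeroMorphisms]
    (hexact : ∀ S : ShortComplex (ModuleCat Λ), S.ShortExact → (S.map F).ShortExact)
    {Y Z : Type u} [AddCommGroup Y] [Module Λ Y] [AddCommGroup Z] [Module Λ Z] {g : Y →ₗ[Λ] Z}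
    (hg : Function.Surjective g) : Function.Surjective (F.map (ModuleCat.ofHom g)).hom :=
  (hexact _ (LinearMap.shortExact_shortComplexKer hg)).moduleCat_surjective_g

theorem subsingleton_obj [F.PreservesZeroMorphisms] (X : ModuleCat Λ) [Subsingleton X] :
    Subsingleton (F.obj X) :=
  ModuleCat.isZero_iff_subsingleton.1 (F.map_isZero (ModuleCat.isZero_iff_subsingleton.2 ‹_›))

theorem nontrivial_obj
    (hreflectsZero : ∀ X : ModuleCat Λ, Limits.IsZero (F.obj X) → Limits.IsZero X)
    (X : ModuleCat Λ) [Nontrivial X] : Nontrivial (F.obj X) := by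
  by_contra h
  rw [not_nontrivial_iff_subsingleton, ← ModuleCat.isZero_iff_subsingleton] at h
  exact not_subsingleton X (ModuleCat.isZero_iff_subsingleton.1 (hreflectsZero X h))

end ExactFunctor

section Bounds

variable (k : Type) {Λ A : Type} [Field k] [Ring Λ] [Algebra k Λ] [FiniteDimensional k Λ]
  [Ring A] [Algebra k A] (F : ModuleCat.{u} Λ ⥤ ModuleCat.{v} A) [F.PreservesZeroMorphisms]

theorem kdim_obj_le_mul
    (hexact : ∀ S : ShortComplex (ModuleCat Λ), S.ShortExact → (S.map F).ShortExact)
    (hfd : ∀ X : ModuleCat Λ, FiniteDimensional k (RestrictScalars k Λ X) →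
      FiniteDimensional k (RestrictScalars k A (F.obj X)))
    (X : ModuleCat Λ) [FiniteDimensional k (RestrictScalars k Λ X)] :
    kdim k A (F.obj X) ≤ kdim k A (F.obj (.of Λ (ULift Λ))) * kdim k Λ X := by
  refine le_mul_of_forall_exists_submodule (fun X ↦ FiniteDimensional k (RestrictScalars k Λ X))
    (fun X ↦ kdim k Λ X) (fun X ↦ kdim k A (F.obj X)) _ (fun X p hX ↦ ?_) (fun X p hX ↦ ?_)
    (fun X p hX ↦ ?_) (fun X hX hFX ↦ ?_) X ‹_›
  · exact finiteDimensional_of_surjective k p.mkQ_surjective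
  · exact kdim_eq_add_quotient k p
  · have := hfd X hX
    exact kdim_obj_eq_add k F hexact X p
  · have := hfd X hX
    have : Nontrivial X := not_subsingleton_iff_nontrivial.1 fun _ ↦
      hFX ((kdim_eq_zero_iff k).2 (subsingleton_obj F X))
    obtain ⟨p, hp, g, hg⟩ := exists_nontrivial_cyclic_submodule (R := Λ) (X := X)
    have := finiteDimensional_of_injective k p.injective_subtype
    have := hfd (.of Λ (ULift Λ)) inferInstance
    exact ⟨p, kdim_pos k, kdim_le_of_surjective k (surjective_map_of_surjective F hexact hg)⟩

theorem kdim_le_mul_kdim_obj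
    (hexact : ∀ S : ShortComplex (ModuleCat Λ), S.ShortExact → (S.map F).ShortExact)
    (hfd : ∀ X : ModuleCat Λ, FiniteDimensional k (RestrictScalars k Λ X) →
      FiniteDimensional k (RestrictScalars k A (F.obj X)))
    (hreflectsZero : ∀ X : ModuleCat Λ, Limits.IsZero (F.obj X) → Limits.IsZero X)
    (X : ModuleCat Λ) [FiniteDimensional k (RestrictScalars k Λ X)] :
    kdim k Λ X ≤ kdim k Λ (ULift.{u} Λ) * kdim k A (F.obj X) := by
  refine le_mul_of_forall_exists_submodule (fun X ↦ FiniteDimensional k (RestrictScalars k Λ X))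
    (fun X ↦ kdim k A (F.obj X)) (fun X ↦ kdim k Λ X) _ (fun X p hX ↦ ?_) (fun X p hX ↦ ?_)
    (fun X p hX ↦ ?_) (fun X hX hX0 ↦ ?_) X ‹_›
  · exact finiteDimensional_of_surjective k p.mkQ_surjective
  · have := hfd X hX
    exact kdim_obj_eq_add k F hexact X p
  · exact kdim_eq_add_quotient k p
  · have : Nontrivial X := not_subsingleton_iff_nontrivial.1 fun h ↦
      hX0 ((kdim_eq_zero_iff k).2 h)
    obtain ⟨p, hp, g, hg⟩ := exists_nontrivial_cyclic_submodule (R := Λ) (X := X)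
    have := hfd (.of Λ p) (finiteDimensional_of_injective k p.injective_subtype)
    have := nontrivial_obj F hreflectsZero (.of Λ p)
    exact ⟨p, kdim_pos k, kdim_le_of_surjective k hg⟩

end Bounds

theorem exists_isInternal_range_map {Λ A : Type*} [Ring Λ] [Ring A]
    (F : ModuleCat.{u} Λ ⥤ ModuleCat.{v} A) [F.Additive] {Y X : ModuleCat.{u} Λ} (f : Y ⟶ X)
    (hf : Function.Injective (F.map f).hom) {ι : Type*} [Fintype ι] [DecidableEq ι]
    {Z : ι → Submodule Λ Y} (hZ : DirectSum.IsInternal Z) :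
    ∃ W : ι → Submodule A (LinearMap.range (F.map f).hom), DirectSum.IsInternal W ∧
      ∀ i, ∃ g : F.obj (.of Λ (Z i)) →ₗ[A] LinearMap.range (F.map f).hom,
        W i ≤ LinearMap.range g := by
  let eN := LinearEquiv.ofInjective (F.map f).hom hf
  -- `F` on endomorphism rings, followed by conjugation with `eN : F(Y) ≃ range (F f)`
  let φ : Module.End Λ Y →+* Module.End A (LinearMap.range (F.map f).hom) :=
    eN.conjRingEquiv.toRingHom.comp <| (ModuleCat.endRingEquiv (F.obj Y)).toRingHom.comp <|
      (F.mapEndRingHom Y).comp (ModuleCat.endRingEquiv Y).symm.toRingHom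
  refine ⟨fun i ↦ LinearMap.range (φ ((Z i).subtype ∘ₗ hZ.proj i)),
    (hZ.completeOrthogonalIdempotents_subtype_comp_proj.map φ).isInternal_range,
    fun i ↦ ⟨eN.toLinearMap ∘ₗ (F.map (ModuleCat.ofHom (Z i).subtype)).hom, ?_⟩⟩
  have hφ : φ ((Z i).subtype ∘ₗ hZ.proj i) = (eN.toLinearMap ∘ₗ
      (F.map (ModuleCat.ofHom (Z i).subtype)).hom) ∘ₗ
      ((F.map (ModuleCat.ofHom (hZ.proj i))).hom ∘ₗ eN.symm.toLinearMap) := by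
    change eN.toLinearMap ∘ₗ (F.map (ModuleCat.ofHom (hZ.proj i) ≫
      ModuleCat.ofHom (Z i).subtype)).hom ∘ₗ eN.symm.toLinearMap = _
    rw [F.map_comp, ModuleCat.hom_comp]
    rfl
  dsimp only
  rw [hφ]
  exact LinearMap.range_comp_le_range _ _

section Hyperfinite

variable (k : Type) {Λ A : Type} [Field k] [Ring Λ] [Algebra k Λ] [FiniteDimensional k Λ]
  [Ring A] [Algebra k A] (F : ModuleCat.{u} Λ ⥤ ModuleCat.{v} A) [F.PreservesZeroMorphisms]

theorem one_sub_mul_kdim_obj_le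
    (hexact : ∀ S : ShortComplex (ModuleCat Λ), S.ShortExact → (S.map F).ShortExact)
    (hfd : ∀ X : ModuleCat Λ, FiniteDimensional k (RestrictScalars k Λ X) →
      FiniteDimensional k (RestrictScalars k A (F.obj X)))
    (hreflectsZero : ∀ X : ModuleCat Λ, Limits.IsZero (F.obj X) → Limits.IsZero X)
    (M : ModuleCat Λ) [FiniteDimensional k (RestrictScalars k Λ M)] (N : Submodule Λ M)
    {δ : ℝ} (hδ : 0 ≤ δ) (hN : (1 - δ) * kdim k Λ M ≤ kdim k Λ N) :
    (1 - kdim k A (F.obj (.of Λ (ULift Λ))) * kdim k Λ (ULift.{u} Λ) * δ) * kdim k A (F.obj M) ≤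
      kdim k A (F.obj (.of Λ N)) := by
  have := hfd M ‹_›
  have := finiteDimensional_of_surjective k N.mkQ_surjective
  have hM := kdim_eq_add_quotient k N
  have hFM := kdim_obj_eq_add k F hexact M N
  have hc := kdim_obj_le_mul k F hexact hfd (.of Λ (M ⧸ N))
  have hd := kdim_le_mul_kdim_obj k F hexact hfd hreflectsZero M
  set c := kdim k A (F.obj (.of Λ (ULift Λ)))
  set d := kdim k Λ (ULift.{u} Λ)
  have hquot : (kdim k Λ (M ⧸ N) : ℝ) ≤ δ * kdim k Λ M := by
    rw [hM, Nat.cast_add] at hN ⊢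
    linarith
  have hFquot : (kdim k A (F.obj (.of Λ (M ⧸ N))) : ℝ) ≤ c * d * δ * kdim k A (F.obj M) :=
    calc (kdim k A (F.obj (.of Λ (M ⧸ N))) : ℝ) ≤ c * kdim k Λ (M ⧸ N) := by exact_mod_cast hc
      _ ≤ c * (δ * (d * kdim k A (F.obj M))) := by
        gcongr
        exact hquot.trans (by gcongr; exact_mod_cast hd)
      _ = c * d * δ * kdim k A (F.obj M) := by ring
  rw [hFM, Nat.cast_add] at hFquot ⊢
  linarith

end Hyperfinite

theorem isHyperfinite_image_of_exact_reflectsZero_general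
    (k Λ A : Type) [Field k] [Ring Λ] [Algebra k Λ] [FiniteDimensional k Λ]
    [Ring A] [Algebra k A]
    (F : ModuleCat Λ ⥤ ModuleCat A) [F.Additive]
    (hexact : ∀ S : ShortComplex (ModuleCat Λ), S.ShortExact → (S.map F).ShortExact)
    (hfd : ∀ X : ModuleCat Λ, @FiniteDimensional k (RestrictScalars k Λ X) _ _ (RestrictScalars.module k Λ X) →
      @FiniteDimensional k (RestrictScalars k A (F.obj X)) _ _
        (RestrictScalars.module k A (F.obj X)))
    (hreflectsZero : ∀ X : ModuleCat Λ, Limits.IsZero (F.obj X) → Limits.IsZero X)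
    (𝓝 : Set (ModuleCat Λ))
    (h𝓝fd : ∀ M ∈ 𝓝, @FiniteDimensional k (RestrictScalars k Λ M) _ _
      (RestrictScalars.module k Λ M))
    (h𝓝 : IsHyperfinite k Λ 𝓝) :
    IsHyperfinite k A (F.obj '' 𝓝) := by
  intro ε hε
  set c := kdim k A (F.obj (.of Λ (ULift Λ)))
  set d := kdim k Λ (ULift Λ)
  obtain ⟨L, hL, h𝓝L⟩ := h𝓝 (ε / (c * d + 1)) (by positivity)
  refine ⟨(c + 1) * L, by positivity, ?_⟩
  rintro _ ⟨M, hM, rfl⟩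
  have := h𝓝fd M hM
  obtain ⟨N, hN, t, Z, hZ, hZL⟩ := h𝓝L M hM
  obtain ⟨W, hW, hWZ⟩ := exists_isInternal_range_map F (ModuleCat.ofHom N.subtype)
    (injective_map_subtype F hexact N) hZ
  refine ⟨_, ?_, t, W, hW, fun j ↦ ?_⟩
  · rw [← kdim_congr k (LinearEquiv.ofInjective _ (injective_map_subtype F hexact N))]
    refine le_trans ?_ (one_sub_mul_kdim_obj_le k F hexact hfd hreflectsZero M N (by positivity) hN)
    gcongr
    rw [mul_div_assoc']
    exact div_le_of_le_mul₀ (by positivity) hε.le (by linarith)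
  · obtain ⟨g, hg⟩ := hWZ j
    have := finiteDimensional_of_injective k N.injective_subtype
    have := finiteDimensional_of_injective k (Z j).injective_subtype
    have := hfd (.of Λ (Z j)) this
    calc kdim k A (W j) ≤ kdim k A (F.obj (.of Λ (Z j))) := kdim_le_of_le_range k hg
      _ ≤ c * kdim k Λ (Z j) := kdim_obj_le_mul k F hexact hfd (.of Λ (Z j))
      _ ≤ (c + 1) * L := by gcongr; exacts [Nat.le_succ c, hZL j]

/-- Proposition: let `F` be an exact additive functor between the module categories of two
finite-dimensional `k`-algebras (mapping finite-dimensional modules to finite-dimensional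
modules) such that `F(X) = 0` implies `X = 0`.  Then the image under `F` of a hyperfinite
family of finite-dimensional modules is again hyperfinite.  (Exactness is expressed by:
`F` sends short exact sequences to short exact sequences.) -/
theorem isHyperfinite_image_of_exact_reflectsZero
    (k Λ A : Type) [Field k] [Ring Λ] [Algebra k Λ] [FiniteDimensional k Λ]
    [Ring A] [Algebra k A] [FiniteDimensional k A]
    (F : ModuleCat Λ ⥤ ModuleCat A) [F.Additive]
    (hexact : ∀ S : ShortComplex (ModuleCat Λ), S.ShortExact → (S.map F).ShortExact)
    (hfd : ∀ X : ModuleCat Λ, @FiniteDimensional k (RestrictScalars k Λ X) _ _ (RestrictScalars.module k Λ X) →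
      @FiniteDimensional k (RestrictScalars k A (F.obj X)) _ _
        (RestrictScalars.module k A (F.obj X)))
    (hreflectsZero : ∀ X : ModuleCat Λ, Limits.IsZero (F.obj X) → Limits.IsZero X)
    (𝓝 : Set (ModuleCat Λ))
    (h𝓝fd : ∀ M ∈ 𝓝, @FiniteDimensional k (RestrictScalars k Λ M) _ _
      (RestrictScalars.module k Λ M))
    (h𝓝 : IsHyperfinite k Λ 𝓝) :
    IsHyperfinite k A (F.obj '' 𝓝) :=
  isHyperfinite_image_of_exact_reflectsZero_general k Λ A F hexact hfd hreflectsZero 𝓝 h𝓝fd h𝓝
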